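/- arXiv:1902.09783 — 4 statements merged into one kernel-verified Lean document; each statement's English description precedes it below -/
import Mathlib

section
/- Let P = (X, Y, R) be a polarity and T ⊆ X × Yᵐ a relation all of whose sections are stable. Then g_T maps m-tuples of stable subsets of X to stable subsets of X and is a complete normal dual operator on P⁺: for each coordinate i < m, every m-tuple A⃗ of stable sets and every (possibly empty) family {B_j}_{j∈J} of stable sets, g_T(A⃗[⋂_J B_j / i]) = ⋂_J g_T(A⃗[B_j / i]), where the empty intersection is X and A⃗[B/i] replaces the i-th entry of A⃗ by B. -/
/-- The right polar `ρ_R A = {y ∈ Y : ∀ x ∈ A, x R y}`. -/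
def rpolar {X Y : Type*} (R : X → Y → Prop) (A : Set X) : Set Y := {y | ∀ x ∈ A, R x y}

/-- The left polar `λ_R B = {x ∈ X : ∀ y ∈ B, x R y}`. -/
def lpolar {X Y : Type*} (R : X → Y → Prop) (B : Set Y) : Set X := {x | ∀ y ∈ B, R x y}

/-- `A ⊆ X` is stable if `A = λ_R (ρ_R A)`. -/
def StableX {X Y : Type*} (R : X → Y → Prop) (A : Set X) : Prop := A = lpolar R (rpolar R A)

/-- `B ⊆ Y` is stable if `B = ρ_R (λ_R B)`. -/
def StableY {X Y : Type*} (R : X → Y → Prop) (B : Set Y) : Prop := B = rpolar R (lpolar R B)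

/-- The quasi-order `≤₁` on `X`. -/
def le1 {X Y : Type*} (R : X → Y → Prop) (x x' : X) : Prop := rpolar R {x} ⊆ rpolar R {x'}

/-- The quasi-order `≤₂` on `Y`. -/
def le2 {X Y : Type*} (R : X → Y → Prop) (y y' : Y) : Prop := lpolar R {y} ⊆ lpolar R {y'}

/-- The operator `f_S` induced on stable sets by `S ⊆ Xⁿ × Y`. -/
def fS {X Y : Type*} {n : ℕ} (R : X → Y → Prop) (S : (Fin n → X) → Y → Prop)
    (A : Fin n → Set X) : Set X :=
  lpolar R {y | ∀ xs : Fin n → X, (∀ i, xs i ∈ A i) → S xs y}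

/-- The dual operator `g_T` induced on stable sets by `T ⊆ X × Yᵐ`. -/
def gT {X Y : Type*} {m : ℕ} (R : X → Y → Prop) (T : X → (Fin m → Y) → Prop)
    (A : Fin m → Set X) : Set X :=
  {x | ∀ ys : Fin m → Y, (∀ i, ys i ∈ rpolar R (A i)) → T x ys}

/-- All sections of `S ⊆ Xⁿ × Y` are stable. -/
def SSectionsStable {X Y : Type*} {n : ℕ} (R : X → Y → Prop)
    (S : (Fin n → X) → Y → Prop) : Prop :=
  (∀ xs : Fin n → X, StableY R {y | S xs y}) ∧
  (∀ (xs : Fin n → X) (i : Fin n) (y : Y), StableX R {x' | S (Function.update xs i x') y})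

/-- All sections of `T ⊆ X × Yᵐ` are stable. -/
def TSectionsStable {X Y : Type*} {m : ℕ} (R : X → Y → Prop)
    (T : X → (Fin m → Y) → Prop) : Prop :=
  (∀ ys : Fin m → Y, StableX R {x | T x ys}) ∧
  (∀ (x : X) (ys : Fin m → Y) (i : Fin m), StableY R {y' | T x (Function.update ys i y')})

/-!
Stable subsets of `X` and `Y` are exactly the extents and intents of the formal concept
lattice of `R`. Since `g_T A⃗` is the intersection of the sections `T[−, y⃗]` over admissible
`y⃗`, it is stable. For the intersection law fix all coordinates of `y⃗` but the `i`-th: then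
`x ∈ g_T (A⃗[B/i])` says `ρ B ⊆ T[x, y⃗[−]_i]`. As the section is stable and `ρ (⋂ B_j)` is the
stable set generated by `⋃ ρ B_j`, the inclusions `ρ B_j ⊆ T[x, y⃗[−]_i]` for all `j` give the one
for `⋂ B_j`.
-/

open Function Set Order

section Polarity

variable {X Y : Type*} (R : X → Y → Prop)

theorem rpolar_eq_upperPolar : rpolar R = upperPolar R := rfl

theorem stableX_iff_isExtent {A : Set X} : StableX R A ↔ IsExtent R A :=
  eq_comm.trans isExtent_iff.symm

theorem stableY_iff_isIntent {B : Set Y} : StableY R B ↔ IsIntent R B :=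
  eq_comm.trans isIntent_iff.symm

variable {R}

theorem upperPolar_sInter_subset_of_isIntent {𝒞 : Set (Set X)} {C : Set Y}
    (h𝒞 : ∀ B ∈ 𝒞, IsExtent R B) (hC : IsIntent R C) (hsub : ∀ B ∈ 𝒞, upperPolar R B ⊆ C) :
    upperPolar R (⋂₀ 𝒞) ⊆ C := by
  have hlower : lowerPolar R C ⊆ ⋂₀ 𝒞 := fun _ hx B hB ↦
    (h𝒞 B hB).eq ▸ lowerPolar_anti R (hsub B hB) hx
  exact hC.eq ▸ upperPolar_anti R hlower

end Polarity

section DualOperator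

variable {X Y : Type*} {m : ℕ} {R : X → Y → Prop} {T : X → (Fin m → Y) → Prop}

theorem mem_gT {x : X} (A : Fin m → Set X) :
    x ∈ gT R T A ↔ ∀ ys : Fin m → Y, (∀ i, ys i ∈ upperPolar R (A i)) → T x ys := .rfl

theorem gT_eq_iInter₂ (A : Fin m → Set X) :
    gT R T A = ⋂ (ys : Fin m → Y) (_ : ∀ i, ys i ∈ upperPolar R (A i)), {x | T x ys} := by
  ext x
  simp only [mem_gT, mem_iInter, mem_ofPred_eq]

theorem isExtent_gT (hT : ∀ ys, IsExtent R {x | T x ys}) (A : Fin m → Set X) :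
    IsExtent R (gT R T A) :=
  gT_eq_iInter₂ A ▸ IsExtent.iInter₂ _ fun ys _ ↦ hT ys

theorem mem_gT_update_iff {x : X} (A : Fin m → Set X) (i : Fin m) (B : Set X) :
    x ∈ gT R T (update A i B) ↔ ∀ ys : Fin m → Y, (∀ j ≠ i, ys j ∈ upperPolar R (A j)) →
      upperPolar R B ⊆ {y | T x (update ys i y)} := by
  rw [mem_gT]
  constructor
  · intro hx ys hys y hy
    refine hx _ fun j ↦ ?_
    rcases eq_or_ne j i with rfl | hj
    · simpa using hy
    · simpa [hj] using hys j hj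
  · intro hx ys hys
    have hoff : ∀ j ≠ i, ys j ∈ upperPolar R (A j) := fun j hj ↦ by
      simpa [hj] using hys j
    have h := hx ys hoff (by simpa using hys i)
    rwa [mem_ofPred_eq, update_eq_self] at h

theorem gT_update_sInter (hT : ∀ x ys i, IsIntent R {y | T x (update ys i y)})
    (A : Fin m → Set X) (i : Fin m) {𝒞 : Set (Set X)} (h𝒞 : ∀ B ∈ 𝒞, IsExtent R B) :
    gT R T (update A i (⋂₀ 𝒞)) = ⋂ B ∈ 𝒞, gT R T (update A i B) := by
  ext x
  simp only [mem_iInter, mem_gT_update_iff]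
  constructor
  · exact fun hx B hB ys hys ↦ (upperPolar_anti R (sInter_subset_of_mem hB)).trans (hx ys hys)
  · exact fun hx ys hys ↦
      upperPolar_sInter_subset_of_isIntent h𝒞 (hT x ys i) fun B hB ↦ hx B hB ys hys

end DualOperator

/-- If all sections of `T ⊆ X × Yᵐ` are stable, then `g_T` maps tuples of stable sets to
stable sets and is a complete normal dual operator on the stable set lattice: it preserves
arbitrary (including empty) intersections in each coordinate. -/
theorem stmt3 {X Y : Type*} {m : ℕ} (R : X → Y → Prop)
    (T : X → (Fin m → Y) → Prop) (hT : TSectionsStable R T) :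
    (∀ A : Fin m → Set X, (∀ i, StableX R (A i)) → StableX R (gT R T A)) ∧
    (∀ (i : Fin m) (A : Fin m → Set X), (∀ j, StableX R (A j)) →
      ∀ 𝒞 : Set (Set X), (∀ B ∈ 𝒞, StableX R B) →
        gT R T (Function.update A i (⋂₀ 𝒞)) = ⋂ B ∈ 𝒞, gT R T (Function.update A i B)) := by
  obtain ⟨hsecX, hsecY⟩ := hT
  refine ⟨fun A _ ↦ ?_, fun i A _ 𝒞 h𝒞 ↦ ?_⟩
  · exact (stableX_iff_isExtent R).2 <|
      isExtent_gT (fun ys ↦ (stableX_iff_isExtent R).1 (hsecX ys)) A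
  · exact gT_update_sInter (fun x ys i ↦ (stableY_iff_isIntent R).1 (hsecY x ys i)) A i
      fun B hB ↦ (stableX_iff_isExtent R).1 (h𝒞 B hB)
end

section
/- Let (X, Y, R) and (X′, Y′, R′) be polarities and let α : X → X′, β : Y → Y′ be a bounded morphism of polarities. Then for all A ⊆ X′ and B ⊆ Y′: (1) β⁻¹(ρ_{R′} A) ⊆ ρ_R(α⁻¹ A), with equality when A is a ≤₁′-upset; (2) α⁻¹(λ_{R′} B) ⊆ λ_R(β⁻¹ B), with equality when B is a ≤₂′-upset; (3) if A is stable in (X′, Y′, R′), then α⁻¹ A is stable in (X, Y, R). -/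
/-- A bounded morphism between plain polarities. -/
structure IsPolarityMorphism {X Y X' Y' : Type*} (R : X → Y → Prop) (R' : X' → Y' → Prop)
    (α : X → X') (β : Y → Y') : Prop where
  mono1 : ∀ ⦃x z : X⦄, le1 R x z → le1 R' (α x) (α z)
  mono2 : ∀ ⦃y w : Y⦄, le2 R y w → le2 R' (β y) (β w)
  backR : ∀ ⦃x : X⦄ ⦃y : Y⦄, R' (α x) (β y) → R x y
  forthR1 : ∀ ⦃x' : X'⦄ ⦃y : Y⦄, (∀ x : X, le1 R' x' (α x) → R x y) → R' x' (β y)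
  forthR2 : ∀ ⦃x : X⦄ ⦃y' : Y'⦄, (∀ y : Y, le2 R' y' (β y) → R x y) → R' (α x) y'

/-- A bounded morphism between Ω-polarities. -/
structure IsBddMorphism {X Y X' Y' : Type*} {n m : ℕ}
    (R : X → Y → Prop) (S : (Fin n → X) → Y → Prop) (T : X → (Fin m → Y) → Prop)
    (R' : X' → Y' → Prop) (S' : (Fin n → X') → Y' → Prop) (T' : X' → (Fin m → Y') → Prop)
    (α : X → X') (β : Y → Y') : Prop where
  mono1 : ∀ ⦃x z : X⦄, le1 R x z → le1 R' (α x) (α z)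
  mono2 : ∀ ⦃y w : Y⦄, le2 R y w → le2 R' (β y) (β w)
  backR : ∀ ⦃x : X⦄ ⦃y : Y⦄, R' (α x) (β y) → R x y
  forthR1 : ∀ ⦃x' : X'⦄ ⦃y : Y⦄, (∀ x : X, le1 R' x' (α x) → R x y) → R' x' (β y)
  forthR2 : ∀ ⦃x : X⦄ ⦃y' : Y'⦄, (∀ y : Y, le2 R' y' (β y) → R x y) → R' (α x) y'
  backS : ∀ ⦃xs : Fin n → X⦄ ⦃y : Y⦄, S' (fun i => α (xs i)) (β y) → S xs y
  forthS : ∀ ⦃xs' : Fin n → X'⦄ ⦃y : Y⦄,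
    (∀ xs : Fin n → X, (∀ i, le1 R' (xs' i) (α (xs i))) → S xs y) → S' xs' (β y)
  backT : ∀ ⦃x : X⦄ ⦃ys : Fin m → Y⦄, T' (α x) (fun i => β (ys i)) → T x ys
  forthT : ∀ ⦃x : X⦄ ⦃ys' : Fin m → Y'⦄,
    (∀ ys : Fin m → Y, (∀ i, le2 R' (ys' i) (β (ys i))) → T x ys) → T' (α x) ys'

/-!
Right polars are `≤₂`-upsets, so for a stable `A` the equality case of (2) rewrites
`α⁻¹ A = α⁻¹ (λ ρ A)` as the left polar `λ (β⁻¹ (ρ A))`, and every left polar is stable.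
-/

section Polarity

variable {X Y : Type*} (R : X → Y → Prop)

theorem mem_rpolar_of_le2 {A : Set X} {y w : Y} (hy : y ∈ rpolar R A) (hle : le2 R y w) :
    w ∈ rpolar R A :=
  fun x hx => hle (fun _ hy' => hy' ▸ hy x hx) w rfl

theorem stableX_lpolar (B : Set Y) : StableX R (lpolar R B) :=
  (lowerPolar_upperPolar_lowerPolar (r := R) B).symm

end Polarity

namespace IsPolarityMorphism

variable {X Y X' Y' : Type*} {R : X → Y → Prop} {R' : X' → Y' → Prop} {α : X → X'} {β : Y → Y'}
  (h : IsPolarityMorphism R R' α β)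
include h

theorem preimage_rpolar_subset (A : Set X') : β ⁻¹' rpolar R' A ⊆ rpolar R (α ⁻¹' A) :=
  fun _ hy x hx => h.backR (hy (α x) hx)

theorem preimage_lpolar_subset (B : Set Y') : α ⁻¹' lpolar R' B ⊆ lpolar R (β ⁻¹' B) :=
  fun _ hx y hy => h.backR (hx (β y) hy)

theorem preimage_rpolar_eq {A : Set X'} (hA : ∀ x ∈ A, ∀ z : X', le1 R' x z → z ∈ A) :
    β ⁻¹' rpolar R' A = rpolar R (α ⁻¹' A) :=
  (h.preimage_rpolar_subset A).antisymm fun _ hy x' hx' =>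
    h.forthR1 fun x hle => hy x (hA x' hx' (α x) hle)

theorem preimage_lpolar_eq {B : Set Y'} (hB : ∀ y ∈ B, ∀ w : Y', le2 R' y w → w ∈ B) :
    α ⁻¹' lpolar R' B = lpolar R (β ⁻¹' B) :=
  (h.preimage_lpolar_subset B).antisymm fun _ hx y' hy' =>
    h.forthR2 fun y hle => hx y (hB y' hy' (β y) hle)

theorem stableX_preimage {A : Set X'} (hA : StableX R' A) : StableX R (α ⁻¹' A) := by
  rw [hA, h.preimage_lpolar_eq fun _ hy _ hle => mem_rpolar_of_le2 R' hy hle]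
  exact stableX_lpolar R _

end IsPolarityMorphism

/-- Lemma on bounded morphisms of polarities: behaviour of `ρ` and `λ` under preimages,
with equality on upsets, and preimages of stable sets are stable. -/
theorem stmt5 {X Y X' Y' : Type*} (R : X → Y → Prop) (R' : X' → Y' → Prop)
    (α : X → X') (β : Y → Y') (h : IsPolarityMorphism R R' α β) :
    (∀ A : Set X', β ⁻¹' (rpolar R' A) ⊆ rpolar R (α ⁻¹' A)) ∧
    (∀ A : Set X', (∀ x ∈ A, ∀ z : X', le1 R' x z → z ∈ A) →
      β ⁻¹' (rpolar R' A) = rpolar R (α ⁻¹' A)) ∧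
    (∀ B : Set Y', α ⁻¹' (lpolar R' B) ⊆ lpolar R (β ⁻¹' B)) ∧
    (∀ B : Set Y', (∀ y ∈ B, ∀ w : Y', le2 R' y w → w ∈ B) →
      α ⁻¹' (lpolar R' B) = lpolar R (β ⁻¹' B)) ∧
    (∀ A : Set X', StableX R' A → StableX R (α ⁻¹' A)) :=
  ⟨h.preimage_rpolar_subset, fun _ => h.preimage_rpolar_eq, h.preimage_lpolar_subset,
    fun _ => h.preimage_lpolar_eq, fun _ => h.stableX_preimage⟩
end

section
/- A bounded morphism (α, β) : P → P′ between Ω-polarities is an isomorphism — i.e. there exists a bounded morphism (α′, β′) : P′ → P with α′ ∘ α = id_X, β′ ∘ β = id_Y, α ∘ α′ = id_{X′} and β ∘ β′ = id_{Y′} — if and only if α and β are bijective and (α, β) preserves the relations R, S and T, i.e. x R y implies α(x) R′ β(y), x⃗ S y implies α(x⃗) S′ β(y), and x T y⃗ implies α(x) T′ β(y⃗). -/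
/-!
If `(α', β')` is a bounded morphism inverse to `(α, β)`, its back conditions `(1_R)`, `(1_S)`,
`(1_T)` say exactly that `(α, β)` preserves the relations. Conversely, a bijective pair that
preserves the relations also reflects them by its own back conditions, so it is an isomorphism of
relational structures; along such an isomorphism `≤₁` and `≤₂` correspond, and the forth
conditions of the inverse pair hold by taking the preimage of the given point as witness.
-/

section

variable {X Y : Type*} (R : X → Y → Prop)

lemma le1_iff (a b : X) : le1 R a b ↔ ∀ y, R a y → R b y := by
  simp [le1, rpolar, Set.subset_def]

lemma le2_iff (a b : Y) : le2 R a b ↔ ∀ x, R x a → R x b := by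
  simp [le2, lpolar, Set.subset_def]

lemma le1_refl (a : X) : le1 R a a := subset_rfl

lemma le2_refl (a : Y) : le2 R a a := subset_rfl

end

structure IsRelIso {X Y X' Y' : Type*} {n m : ℕ}
    (R : X → Y → Prop) (S : (Fin n → X) → Y → Prop) (T : X → (Fin m → Y) → Prop)
    (R' : X' → Y' → Prop) (S' : (Fin n → X') → Y' → Prop) (T' : X' → (Fin m → Y') → Prop)
    (e : X ≃ X') (f : Y ≃ Y') : Prop where
  rel_iff : ∀ x y, R' (e x) (f y) ↔ R x y
  relS_iff : ∀ xs y, S' (fun i => e (xs i)) (f y) ↔ S xs y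
  relT_iff : ∀ x ys, T' (e x) (fun i => f (ys i)) ↔ T x ys

namespace IsRelIso

variable {X Y X' Y' : Type*} {n m : ℕ}
    {R : X → Y → Prop} {S : (Fin n → X) → Y → Prop} {T : X → (Fin m → Y) → Prop}
    {R' : X' → Y' → Prop} {S' : (Fin n → X') → Y' → Prop} {T' : X' → (Fin m → Y') → Prop}
    {e : X ≃ X'} {f : Y ≃ Y'}

lemma symm (h : IsRelIso R S T R' S' T' e f) : IsRelIso R' S' T' R S T e.symm f.symm where
  rel_iff x' y' := by
    rw [← h.rel_iff, e.apply_symm_apply, f.apply_symm_apply]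
  relS_iff xs' y' := by
    rw [← h.relS_iff]
    simp only [Equiv.apply_symm_apply]
  relT_iff x' ys' := by
    rw [← h.relT_iff]
    simp only [Equiv.apply_symm_apply]

lemma le1_apply_iff (h : IsRelIso R S T R' S' T' e f) (x z : X) :
    le1 R' (e x) (e z) ↔ le1 R x z := by
  simp only [le1_iff, f.surjective.forall, h.rel_iff]

lemma le2_apply_iff (h : IsRelIso R S T R' S' T' e f) (y w : Y) :
    le2 R' (f y) (f w) ↔ le2 R y w := by
  simp only [le2_iff, e.surjective.forall, h.rel_iff]

lemma isBddMorphism (h : IsRelIso R S T R' S' T' e f) : IsBddMorphism R S T R' S' T' e f where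
  mono1 x z := (h.le1_apply_iff x z).mpr
  mono2 y w := (h.le2_apply_iff y w).mpr
  backR x y := (h.rel_iff x y).mp
  forthR1 x' y hx := by
    simpa only [e.apply_symm_apply] using
      (h.rel_iff _ y).mpr (hx (e.symm x') (by simpa using le1_refl R' x'))
  forthR2 x y' hy := by
    simpa only [f.apply_symm_apply] using
      (h.rel_iff x _).mpr (hy (f.symm y') (by simpa using le2_refl R' y'))
  backS xs y := (h.relS_iff xs y).mp
  forthS xs' y hxs := by
    simpa only [e.apply_symm_apply] using
      (h.relS_iff _ y).mpr (hxs (fun i => e.symm (xs' i)) fun i => by simpa using le1_refl R' _)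
  backT x ys := (h.relT_iff x ys).mp
  forthT x ys' hys := by
    simpa only [f.apply_symm_apply] using
      (h.relT_iff x _).mpr (hys (fun i => f.symm (ys' i)) fun i => by simpa using le2_refl R' _)

end IsRelIso

namespace IsBddMorphism

variable {X Y X' Y' : Type*} {n m : ℕ}
    {R : X → Y → Prop} {S : (Fin n → X) → Y → Prop} {T : X → (Fin m → Y) → Prop}
    {R' : X' → Y' → Prop} {S' : (Fin n → X') → Y' → Prop} {T' : X' → (Fin m → Y') → Prop}
    {α : X → X'} {β : Y → Y'} {α' : X' → X} {β' : Y' → Y}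

lemma map_rel_of_leftInverse (h' : IsBddMorphism R' S' T' R S T α' β')
    (hα : Function.LeftInverse α' α) (hβ : Function.LeftInverse β' β) :
    (∀ x y, R x y → R' (α x) (β y)) ∧
    (∀ xs y, S xs y → S' (fun i => α (xs i)) (β y)) ∧
    (∀ x ys, T x ys → T' (α x) (fun i => β (ys i))) :=
  ⟨fun x y hxy => h'.backR (by rwa [hα x, hβ y]),
   fun xs y hxs => h'.backS (by simpa only [hα _, hβ y] using hxs),
   fun x ys hys => h'.backT (by simpa only [hα x, hβ _] using hys)⟩

lemma isRelIso_ofBijective (h : IsBddMorphism R S T R' S' T' α β)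
    (hα : Function.Bijective α) (hβ : Function.Bijective β)
    (pR : ∀ x y, R x y → R' (α x) (β y))
    (pS : ∀ xs y, S xs y → S' (fun i => α (xs i)) (β y))
    (pT : ∀ x ys, T x ys → T' (α x) (fun i => β (ys i))) :
    IsRelIso R S T R' S' T' (Equiv.ofBijective α hα) (Equiv.ofBijective β hβ) where
  rel_iff x y := ⟨fun h1 => h.backR h1, pR x y⟩
  relS_iff xs y := ⟨fun h1 => h.backS h1, pS xs y⟩
  relT_iff x ys := ⟨fun h1 => h.backT h1, pT x ys⟩

end IsBddMorphism

theorem stmt10_general {X Y X' Y' : Type*} {n m : ℕ}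
    (R : X → Y → Prop) (S : (Fin n → X) → Y → Prop) (T : X → (Fin m → Y) → Prop)
    (R' : X' → Y' → Prop) (S' : (Fin n → X') → Y' → Prop) (T' : X' → (Fin m → Y') → Prop)
    (α : X → X') (β : Y → Y') (h : IsBddMorphism R S T R' S' T' α β) :
    (∃ (α' : X' → X) (β' : Y' → Y),
      IsBddMorphism R' S' T' R S T α' β' ∧
      α' ∘ α = id ∧ β' ∘ β = id ∧ α ∘ α' = id ∧ β ∘ β' = id) ↔
    (Function.Bijective α ∧ Function.Bijective β ∧
      (∀ (x : X) (y : Y), R x y → R' (α x) (β y)) ∧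
      (∀ (xs : Fin n → X) (y : Y), S xs y → S' (fun i => α (xs i)) (β y)) ∧
      (∀ (x : X) (ys : Fin m → Y), T x ys → T' (α x) (fun i => β (ys i)))) := by
  constructor
  · rintro ⟨α', β', h', hα'α, hβ'β, hαα', hββ'⟩
    have lα : Function.LeftInverse α' α := congrFun hα'α
    have lβ : Function.LeftInverse β' β := congrFun hβ'β
    have rα : Function.RightInverse α' α := congrFun hαα'
    have rβ : Function.RightInverse β' β := congrFun hββ'
    exact ⟨⟨lα.injective, rα.surjective⟩, ⟨lβ.injective, rβ.surjective⟩,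
      h'.map_rel_of_leftInverse lα lβ⟩
  · rintro ⟨hα, hβ, pR, pS, pT⟩
    set e := Equiv.ofBijective α hα
    set f := Equiv.ofBijective β hβ
    have hiso : IsRelIso R S T R' S' T' e f := h.isRelIso_ofBijective hα hβ pR pS pT
    exact ⟨e.symm, f.symm, hiso.symm.isBddMorphism,
      e.symm_comp_self, f.symm_comp_self, e.self_comp_symm, f.self_comp_symm⟩

/-- A bounded morphism `(α, β)` of Ω-polarities is an isomorphism (has a two-sided inverse
bounded morphism) iff `α` and `β` are bijective and `(α, β)` preserves `R`, `S` and `T`. -/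
theorem stmt10 {X Y X' Y' : Type*} {n m : ℕ}
    (R : X → Y → Prop) (S : (Fin n → X) → Y → Prop) (T : X → (Fin m → Y) → Prop)
    (hS : SSectionsStable R S) (hT : TSectionsStable R T)
    (R' : X' → Y' → Prop) (S' : (Fin n → X') → Y' → Prop) (T' : X' → (Fin m → Y') → Prop)
    (hS' : SSectionsStable R' S') (hT' : TSectionsStable R' T')
    (α : X → X') (β : Y → Y') (h : IsBddMorphism R S T R' S' T' α β) :
    (∃ (α' : X' → X) (β' : Y' → Y),
      IsBddMorphism R' S' T' R S T α' β' ∧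
      α' ∘ α = id ∧ β' ∘ β = id ∧ α ∘ α' = id ∧ β ∘ β' = id) ↔
    (Function.Bijective α ∧ Function.Bijective β ∧
      (∀ (x : X) (y : Y), R x y → R' (α x) (β y)) ∧
      (∀ (xs : Fin n → X) (y : Y), S xs y → S' (fun i => α (xs i)) (β y)) ∧
      (∀ (x : X) (ys : Fin m → Y), T x ys → T' (α x) (fun i => β (ys i)))) :=
  stmt10_general R S T R' S' T' α β h
end

section
/- Let L be a bounded lattice and (𝓕_L, 𝓘_L, ⋔) its canonical polarity. For the quasi-orders ≤₁ and ≤₂ defined from ⋔ (F ≤₁ F′ iff every ideal D with F ⋔ D has F′ ⋔ D; D ≤₂ D′ iff every filter F with F ⋔ D has F ⋔ D′), one has: for all F, F′ ∈ 𝓕_L, F ≤₁ F′ if and only if F ⊆ F′; and for all D, D′ ∈ 𝓘_L, D ≤₂ D′ if and only if D ⊆ D′. -/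
/-- A nonempty lattice filter: nonempty, upward closed, closed under binary meets. -/
def IsLatFilter {L : Type*} [Lattice L] (F : Set L) : Prop :=
  F.Nonempty ∧ (∀ ⦃a b : L⦄, a ∈ F → a ≤ b → b ∈ F) ∧ (∀ ⦃a b : L⦄, a ∈ F → b ∈ F → a ⊓ b ∈ F)

/-- A nonempty lattice ideal: nonempty, downward closed, closed under binary joins. -/
def IsLatIdeal {L : Type*} [Lattice L] (D : Set L) : Prop :=
  D.Nonempty ∧ (∀ ⦃a b : L⦄, a ∈ D → b ≤ a → b ∈ D) ∧ (∀ ⦃a b : L⦄, a ∈ D → b ∈ D → a ⊔ b ∈ D)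

/-- The set `𝓕_L` of nonempty filters of `L`. -/
abbrev Filt (L : Type*) [Lattice L] := {F : Set L // IsLatFilter F}

/-- The set `𝓘_L` of nonempty ideals of `L`. -/
abbrev Idl (L : Type*) [Lattice L] := {D : Set L // IsLatIdeal D}

/-- The canonical polarity relation: `F ⋔ D` iff `F ∩ D ≠ ∅`. -/
def canR {L : Type*} [Lattice L] (F : Filt L) (D : Idl L) : Prop := (F.val ∩ D.val).Nonempty

theorem mem_rpolar_singleton {X Y : Type*} {R : X → Y → Prop} {x : X} {y : Y} :
    y ∈ rpolar R {x} ↔ R x y := by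
  simp [rpolar]

theorem mem_lpolar_singleton {X Y : Type*} {R : X → Y → Prop} {x : X} {y : Y} :
    x ∈ lpolar R {y} ↔ R x y := by
  simp [lpolar]

theorem le1_iff_s14 {X Y : Type*} {R : X → Y → Prop} {x x' : X} :
    le1 R x x' ↔ ∀ y, R x y → R x' y := by
  simp only [le1, Set.subset_def, mem_rpolar_singleton]

theorem le2_iff_s14 {X Y : Type*} {R : X → Y → Prop} {y y' : Y} :
    le2 R y y' ↔ ∀ x, R x y → R x y' := by
  simp only [le2, Set.subset_def, mem_lpolar_singleton]

section Lattice

variable {L : Type*} [Lattice L]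

theorem isLatIdeal_Iic (a : L) : IsLatIdeal (Set.Iic a) :=
  ⟨⟨a, le_rfl⟩, fun _ _ hb hab => hab.trans hb, fun _ _ => sup_le⟩

theorem isLatFilter_Ici (a : L) : IsLatFilter (Set.Ici a) :=
  ⟨⟨a, le_rfl⟩, fun _ _ ha hab => ha.trans hab, fun _ _ => le_inf⟩

def Idl.principal (a : L) : Idl L := ⟨Set.Iic a, isLatIdeal_Iic a⟩

def Filt.principal (a : L) : Filt L := ⟨Set.Ici a, isLatFilter_Ici a⟩

theorem canR_principal_right_iff {F : Filt L} {a : L} :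
    canR F (Idl.principal a) ↔ a ∈ F.val :=
  ⟨fun ⟨_, hbF, hba⟩ => F.prop.2.1 hbF hba, fun ha => ⟨a, ha, le_rfl⟩⟩

theorem canR_principal_left_iff {D : Idl L} {a : L} :
    canR (Filt.principal a) D ↔ a ∈ D.val :=
  ⟨fun ⟨_, hab, hbD⟩ => D.prop.2.1 hbD hab, fun ha => ⟨a, le_rfl, ha⟩⟩

theorem le1_canR_iff {F F' : Filt L} : le1 canR F F' ↔ F.val ⊆ F'.val := by
  rw [le1_iff_s14]
  refine ⟨fun h a ha => ?_, fun hsub D ⟨b, hbF, hbD⟩ => ⟨b, hsub hbF, hbD⟩⟩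
  exact canR_principal_right_iff.1 (h _ (canR_principal_right_iff.2 ha))

theorem le2_canR_iff {D D' : Idl L} : le2 canR D D' ↔ D.val ⊆ D'.val := by
  rw [le2_iff_s14]
  refine ⟨fun h a ha => ?_, fun hsub F ⟨b, hbF, hbD⟩ => ⟨b, hbF, hsub hbD⟩⟩
  exact canR_principal_left_iff.1 (h _ (canR_principal_left_iff.2 ha))

end Lattice

theorem stmt14_general {L : Type*} [Lattice L] :
    (∀ F F' : Filt L, le1 (canR (L := L)) F F' ↔ F.val ⊆ F'.val) ∧
    (∀ D D' : Idl L, le2 (canR (L := L)) D D' ↔ D.val ⊆ D'.val) :=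
  ⟨fun _ _ => le1_canR_iff, fun _ _ => le2_canR_iff⟩

/-- In the canonical polarity `(𝓕_L, 𝓘_L, ⋔)` of a bounded lattice `L`, the quasi-orders
`≤₁` and `≤₂` coincide with set inclusion of filters and of ideals respectively. -/
theorem stmt14 {L : Type*} [Lattice L] [BoundedOrder L] :
    (∀ F F' : Filt L, le1 (canR (L := L)) F F' ↔ F.val ⊆ F'.val) ∧
    (∀ D D' : Idl L, le2 (canR (L := L)) D D' ↔ D.val ⊆ D'.val) :=
  stmt14_general
end
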